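/- arXiv:math/0609501 — 2 statements merged into one kernel-verified Lean document; each statement's English description precedes it below -/
import Mathlib

section
/- Let (V, μ, α) be a Hom-algebra over a field of characteristic 0, with commutator [x,y] = μ(x,y) − μ(y,x) and symmetrized product x∙y = (1/2)(μ(x,y) + μ(y,x)). Then (V,μ,α) is flexible (i.e. μ(μ(x,y),α(x)) = μ(α(x),μ(y,x)) for all x,y) if and only if [α(x), y∙z] = [x,y]∙α(z) + α(y)∙[x,z] for all x,y,z ∈ V. -/
/-!
Write `as(x, y, z) = μ(μ(x, y), α(z)) − μ(α(x), μ(y, z))` for the Hom-associator, so that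
flexibility says `as(x, y, x) = 0`. Expanding both sides, twice the Leibniz defect
`[α(x), y∙z] − [x, y]∙α(z) − α(y)∙[x, z]` is a signed sum of the three symmetrizations
`as(a, b, c) + as(c, b, a)`, which vanish by linearizing flexibility; for `z = x` the same sum
collapses to `−2 as(x, y, x)`, so dividing by 2 recovers flexibility.
-/

section HomAlgebra

variable {R M : Type*} [CommRing R] [AddCommGroup M] [Module R M]
  (μ : M →ₗ[R] M →ₗ[R] M) (α : M →ₗ[R] M)

def homAssociator (x y z : M) : M :=
  μ (μ x y) (α z) - μ (α x) (μ y z)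

theorem homAssociator_add_homAssociator_swap_eq_zero
    (hflex : ∀ x y : M, homAssociator μ α x y x = 0) (x y z : M) :
    homAssociator μ α x y z + homAssociator μ α z y x = 0 := by
  have hxz := hflex (x + z) y
  have hx := hflex x y
  have hz := hflex z y
  simp only [homAssociator, map_add, LinearMap.add_apply] at hxz hx hz ⊢
  linear_combination (norm := module) hxz - hx - hz

theorem leibniz_defect_eq_homAssociator (x y z : M) :
    (μ (α x) (μ y z + μ z y) - μ (μ y z + μ z y) (α x))
      - (μ (μ x y - μ y x) (α z) + μ (α z) (μ x y - μ y x))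
      - (μ (α y) (μ x z - μ z x) + μ (μ x z - μ z x) (α y)) =
    (homAssociator μ α y x z + homAssociator μ α z x y)
      - (homAssociator μ α x y z + homAssociator μ α z y x)
      - (homAssociator μ α x z y + homAssociator μ α y z x) := by
  simp only [homAssociator, map_add, map_sub, LinearMap.add_apply, LinearMap.sub_apply]
  abel

end HomAlgebra

theorem stmt_10 {K V : Type*} [Field K] [CharZero K] [AddCommGroup V] [Module K V]
    (μ : V →ₗ[K] V →ₗ[K] V) (α : V →ₗ[K] V)
    (br : V → V → V) (hbr : ∀ x y : V, br x y = μ x y - μ y x)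
    (j : V → V → V) (hj : ∀ x y : V, j x y = ((2 : K)⁻¹) • (μ x y + μ y x)) :
    (∀ x y : V, μ (μ x y) (α x) = μ (α x) (μ y x)) ↔
    (∀ x y z : V, br (α x) (j y z) = j (br x y) (α z) + j (α y) (br x z)) := by
  have defect_eq (x y z : V) :
      br (α x) (j y z) - (j (br x y) (α z) + j (α y) (br x z)) = (2 : K)⁻¹ •
        ((homAssociator μ α y x z + homAssociator μ α z x y)
          - (homAssociator μ α x y z + homAssociator μ α z y x)
          - (homAssociator μ α x z y + homAssociator μ α y z x)) := by
    simp only [hbr, hj, map_smul, LinearMap.smul_apply]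
    linear_combination (norm := module) (2 : K)⁻¹ • leibniz_defect_eq_homAssociator μ α x y z
  constructor
  · intro hflex x y z
    have swap := homAssociator_add_homAssociator_swap_eq_zero μ α
      fun x y => sub_eq_zero.mpr (hflex x y)
    rw [← sub_eq_zero, defect_eq, swap y x z, swap x y z, swap x z y]
    simp
  · intro hleib x y
    have hx := defect_eq x y x
    rw [sub_eq_zero.mpr (hleib x y x)] at hx
    have : homAssociator μ α x y x = 0 := by linear_combination (norm := module) hx
    exact sub_eq_zero.mp this
end

section
/- Let V be a 3-dimensional vector space over a field K of characteristic 0 with basis (e₁,e₂,e₃), α the linear map with diagonal matrix diag(a,b,b) with a,b ∈ K, and the skew-symmetric bracket given (for a ≠ 0) by [e₁,e₂] = C₁ e₁ + C₂ e₃, [e₁,e₃] = C₃ e₂, [e₂,e₃] = C₄ e₁ + (b·C₁/a) e₃ for arbitrary constants C₁,C₂,C₃,C₄ ∈ K. Then (V, [·,·], α) is a Hom-Lie algebra, i.e. the Hom-Jacobi identity holds for all x,y,z ∈ V. -/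
/-!
Skew-symmetry makes the bracket alternating (char K ≠ 2). The Hom-Jacobiator
`J(x, y, z) = [α x, [y, z]] + [α y, [z, x]] + [α z, [x, y]]` of an alternating bracket is an
alternating trilinear map, so on a space of dimension 3 it vanishes as soon as it vanishes at a
basis `(e₁, e₂, e₃)`. There
`J(e₁, e₂, e₃) = a [e₁, C₄ e₁ + (b C₁ / a) e₃] - b C₃ [e₂, e₂] + b [e₃, C₁ e₁ + C₂ e₃]
  = b C₁ C₃ e₂ - b C₁ C₃ e₂ = 0`.
-/

theorem LinearMap.isAlt_of_skew {R M N : Type*} [CommSemiring R] [AddCommMonoid M] [Module R M]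
    [AddCommGroup N] [Module R N] [IsAddTorsionFree N] {B : M →ₗ[R] M →ₗ[R] N}
    (hB : ∀ x y, B x y = -B y x) :
    B.IsAlt :=
  fun x => self_eq_neg.mp (hB x x)

theorem AlternatingMap.eq_zero_of_map_basis_eq_zero {R M N ι : Type*} [CommSemiring R]
    [AddCommMonoid M] [Module R M] [AddCommGroup N] [Module R N] [Fintype ι] [DecidableEq ι]
    (e : Module.Basis ι R M) (f : M [⋀^ι]→ₗ[R] N) (h : f e = 0) : f = 0 :=
  e.ext_alternating fun σ hσ => by
    let τ : Equiv.Perm ι := Equiv.ofBijective σ (Finite.injective_iff_bijective.1 hσ)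
    change f (e ∘ τ) = 0
    rw [f.map_perm, h, smul_zero]

section HomJacobiator

variable {R M : Type*} [CommRing R] [AddCommGroup M] [Module R M]
  (br : M →ₗ[R] M →ₗ[R] M) (α : M →ₗ[R] M)

def homJacobiator (x y z : M) : M :=
  br (α x) (br y z) + br (α y) (br z x) + br (α z) (br x y)

theorem homJacobiator_rotate (x y z : M) :
    homJacobiator br α x y z = homJacobiator br α y z x := by
  unfold homJacobiator
  abel

variable {br}

theorem homJacobiator_self_left (hbr : br.IsAlt) (x z : M) : homJacobiator br α x x z = 0 := by
  rw [homJacobiator, hbr.self_eq_zero, map_zero, add_zero, ← map_add, ← hbr.neg z x,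
    neg_add_cancel, map_zero]

theorem homJacobiator_self_right (hbr : br.IsAlt) (x y : M) : homJacobiator br α x y y = 0 := by
  rw [homJacobiator_rotate, homJacobiator_self_left α hbr]

theorem homJacobiator_self_outer (hbr : br.IsAlt) (x y : M) : homJacobiator br α x y x = 0 := by
  rw [← homJacobiator_rotate, homJacobiator_self_left α hbr]

def homJacobiatorAlternating (hbr : br.IsAlt) : M [⋀^Fin 3]→ₗ[R] M where
  toFun v := homJacobiator br α (v 0) (v 1) (v 2)
  map_update_add' {_} v i x y := by
    -- `simp` can only evaluate `Function.update` at numerals with the standard instance.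
    obtain rfl : ‹DecidableEq (Fin 3)› = instDecidableEqFin 3 := Subsingleton.elim _ _
    fin_cases i <;> simp [homJacobiator] <;> abel
  map_update_smul' {_} v i c x := by
    obtain rfl : ‹DecidableEq (Fin 3)› = instDecidableEqFin 3 := Subsingleton.elim _ _
    fin_cases i <;> simp [homJacobiator, smul_add]
  map_eq_zero_of_eq' v i j hij hne := by
    fin_cases i <;> fin_cases j <;>
      simp only [Fin.zero_eta, Fin.mk_one, Fin.reduceFinMk] at hij hne ⊢ <;>
      first
      | exact absurd rfl hne
      | rw [hij]
        first
        | exact homJacobiator_self_left α hbr _ _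
        | exact homJacobiator_self_right α hbr _ _
        | exact homJacobiator_self_outer α hbr _ _

theorem homJacobiator_eq_zero_of_basis (hbr : br.IsAlt) (e : Module.Basis (Fin 3) R M)
    (he : homJacobiator br α (e 0) (e 1) (e 2) = 0) (x y z : M) :
    homJacobiator br α x y z = 0 := by
  have hJ := (homJacobiatorAlternating α hbr).eq_zero_of_map_basis_eq_zero e he
  exact congr($hJ ![x, y, z])

end HomJacobiator

theorem stmt_16 {K : Type*} [Field K] [CharZero K]
    (a b : K) (ha : a ≠ 0) (C1 C2 C3 C4 : K)
    (br : (Fin 3 → K) →ₗ[K] (Fin 3 → K) →ₗ[K] (Fin 3 → K))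
    (α : (Fin 3 → K) →ₗ[K] (Fin 3 → K))
    (e : Fin 3 → (Fin 3 → K)) (he : ∀ i, e i = Pi.single i 1)
    (hα1 : α (e 0) = a • e 0) (hα2 : α (e 1) = b • e 1) (hα3 : α (e 2) = b • e 2)
    (hskew : ∀ x y : Fin 3 → K, br x y = - br y x)
    (h12 : br (e 0) (e 1) = C1 • e 0 + C2 • e 2)
    (h13 : br (e 0) (e 2) = C3 • e 1)
    (h23 : br (e 1) (e 2) = C4 • e 0 + (b * C1 / a) • e 2) :
    ∀ x y z : Fin 3 → K,
      br (α x) (br y z) + br (α y) (br z x) + br (α z) (br x y) = 0 := by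
  have hbr : br.IsAlt := LinearMap.isAlt_of_skew hskew
  have hbasis : ⇑(Pi.basisFun K (Fin 3)) = e := funext fun i => by rw [Pi.basisFun_apply, he]
  have hJ : homJacobiator br α (e 0) (e 1) (e 2) = 0 := by
    simp only [homJacobiator, hα1, hα2, hα3, h12, h23, hskew (e 2) (e 0), h13, map_add, map_smul,
      map_neg, LinearMap.smul_apply, hbr.self_eq_zero, smul_zero, smul_neg, zero_add, add_zero]
    match_scalars
    field_simp
    ring
  intro x y z
  exact homJacobiator_eq_zero_of_basis α hbr _ (hbasis ▸ hJ) x y z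
end
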